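/- arXiv:1904.08339 — 7 statements merged into one kernel-verified Lean document; each statement's English description precedes it below -/
import Mathlib

section
/- In the Fibonacci word (the fixed point of the substitution 0→01, 1→0, starting from 0), the position of the n-th occurrence of the letter 0 is ⌊nφ⌋ and the position of the n-th occurrence of the letter 1 is ⌊nφ²⌋, where φ = (1+√5)/2 (positions indexed starting from 1). -/
/-!
Let `f` be the Fibonacci word and `σ i = i + #{k < i | f k = 0}`, the length of the image of
`f[0, i)` under the substitution. Since the substitution fixes `f`, the image of the letter `f i`
starts at position `σ i`: so `f (σ i) = 0`, `f (σ i + 1) = 1` when `f i = 0`, and these positions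
exhaust `ℕ`. Hence the zeros of `f` are at `σ 0 < σ 1 < ⋯` and the ones at `σ (σ j) + 1`.
Moreover `σ 0 = 0` and `σ (n + 1) = σ n + 1 + [n ∈ range σ]`, a recursion with a unique solution.
Because `1 / φ = φ - 1`, the gap `⌊(m + 1)φ⌋ - ⌊mφ⌋` is `2` exactly when `m = ⌊jφ⌋` for some `j`,
so `n ↦ ⌊(n + 1)φ⌋ - 1` solves the same recursion and equals `σ`. Finally
`⌊⌊kφ⌋φ⌋ = ⌊kφ⌋ + k - 1 = ⌊kφ²⌋ - 1` turns `σ (σ j) + 1` into the Beatty sequence of `φ²`.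
-/

/-- The Fibonacci substitution 0 ↦ 01, 1 ↦ 0, applied to a word. -/
def fibSub (w : List ℕ) : List ℕ :=
  w.flatMap (fun j => if j = 0 then [0, 1] else [0])

/-- The Fibonacci word (0-indexed): the fixed point of 0 ↦ 01, 1 ↦ 0 starting from 0. -/
def fibWord (n : ℕ) : ℕ := (fibSub^[n + 1] [0]).getD n 0

/-- 1-based position of the n-th (1-based) occurrence of the letter `j` in the Fibonacci word. -/
noncomputable def fibPos (j n : ℕ) : ℕ :=
  Nat.nth (fun m => fibWord m = j) (n - 1) + 1

noncomputable def φ : ℝ := (1 + Real.sqrt 5) / 2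

theorem Nat.nth_eq_of_strictMono {p : ℕ → Prop} {f : ℕ → ℕ} (hf : StrictMono f)
    (hp : ∀ m, p m ↔ m ∈ Set.range f) : Nat.nth p = f := by
  have hinf : (Set.ofPred p).Infinite := by
    convert Set.infinite_range_of_injective hf.injective
    ext m
    exact hp m
  funext n
  refine (Nat.eq_nth_of_strictMonoOn_of_mapsTo_of_surjOn f ?_ (fun k _ => (hp _).2 ⟨k, rfl⟩)
    (hf.strictMonoOn _) fun hfin => absurd hfin hinf).symm
  intro m hm
  obtain ⟨k, rfl⟩ := (hp m).1 hm
  exact ⟨k, fun hfin => absurd hfin hinf, rfl⟩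

theorem Int.exists_floor_mul_eq_iff {K : Type*} [Field K] [LinearOrder K] [IsStrictOrderedRing K]
    [FloorRing K] {r : K} (hr : 0 < r) (m : ℤ) :
    (∃ j : ℤ, ⌊j * r⌋ = m) ↔ ⌈m / r⌉ < ⌈(m + 1) / r⌉ := by
  have hj (j : ℤ) : ⌊j * r⌋ = m ↔ ⌈m / r⌉ ≤ j ∧ j < ⌈(m + 1) / r⌉ := by
    rw [Int.floor_eq_iff, Int.ceil_le, Int.lt_ceil, div_le_iff₀ hr, lt_div_iff₀ hr]
  simp_rw [hj]
  exact ⟨fun ⟨_, hlo, hhi⟩ => hlo.trans_lt hhi, fun h => ⟨_, le_rfl, h⟩⟩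

open Classical in
def IsSelfGenerating (p : ℕ → ℤ) : Prop :=
  p 0 = 0 ∧ ∀ n : ℕ, p (n + 1) = p n + 1 + if (n : ℤ) ∈ Set.range p then 1 else 0

namespace IsSelfGenerating

variable {p q : ℕ → ℤ}

lemma le_apply (hp : IsSelfGenerating p) (n : ℕ) : (n : ℤ) ≤ p n := by
  induction n with
  | zero => simp [hp.1]
  | succ n ih => rw [hp.2]; split_ifs <;> push_cast <;> omega

lemma mem_range_iff (hp : IsSelfGenerating p) (n : ℕ) :
    (n : ℤ) ∈ Set.range p ↔ ∃ k ≤ n, p k = n :=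
  ⟨fun ⟨k, hk⟩ => ⟨k, by have := hp.le_apply k; omega, hk⟩, fun ⟨k, _, hk⟩ => ⟨k, hk⟩⟩

open Classical in
theorem unique (hp : IsSelfGenerating p) (hq : IsSelfGenerating q) : p = q := by
  suffices h : ∀ n, ∀ k ≤ n, p k = q k from funext fun n => h n n le_rfl
  intro n
  induction n with
  | zero => intro k hk; rw [Nat.le_zero.1 hk, hp.1, hq.1]
  | succ n ih =>
    intro k hk
    rcases Nat.lt_or_eq_of_le hk with hk | rfl
    · exact ih k (Nat.lt_succ_iff.1 hk)
    · have hrange : (n : ℤ) ∈ Set.range p ↔ (n : ℤ) ∈ Set.range q := by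
        rw [hp.mem_range_iff, hq.mem_range_iff]
        exact exists_congr fun k => and_congr_right fun hk => by rw [ih k hk]
      rw [hp.2, hq.2, ih n le_rfl, if_congr hrange rfl rfl]

end IsSelfGenerating

namespace Real

lemma ceil_intCast_div_goldenRatio (m : ℤ) : ⌈m / goldenRatio⌉ = ⌈m * goldenRatio⌉ - m := by
  have h : (m : ℝ) / goldenRatio = m * goldenRatio - m := by
    rw [div_eq_iff goldenRatio_pos.ne']
    linear_combination (-m : ℝ) * goldenRatio_sq
  rw [h, Int.ceil_sub_intCast]

lemma ceil_intCast_mul_goldenRatio {m : ℤ} (hm : m ≠ 0) :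
    ⌈m * goldenRatio⌉ = ⌊m * goldenRatio⌋ + 1 :=
  (Int.ceil_eq_floor_add_one_iff_notMem _).2 fun ⟨z, hz⟩ =>
    (goldenRatio_irrational.intCast_mul hm).ne_int z hz.symm

open Classical in
lemma floor_add_one_mul_goldenRatio {m : ℤ} (hm : 0 < m) :
    ⌊(m + 1) * goldenRatio⌋ =
      ⌊m * goldenRatio⌋ + 1 + if ∃ j : ℤ, ⌊j * goldenRatio⌋ = m then 1 else 0 := by
  have hceil := ceil_intCast_mul_goldenRatio (m := m + 1) (by omega)
  push_cast at hceil
  have hlo : ⌊m * goldenRatio⌋ + 1 ≤ ⌊(m + 1) * goldenRatio⌋ := by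
    rw [← Int.floor_add_one]
    exact Int.floor_mono (by nlinarith [one_lt_goldenRatio])
  have hhi : ⌊(m + 1) * goldenRatio⌋ ≤ ⌊m * goldenRatio⌋ + 2 := by
    rw [← Int.floor_add_intCast]
    exact Int.floor_mono (by push_cast; nlinarith [goldenRatio_lt_two])
  have hdiv := ceil_intCast_div_goldenRatio (m + 1)
  push_cast at hdiv
  have hexists := Int.exists_floor_mul_eq_iff goldenRatio_pos m
  rw [ceil_intCast_div_goldenRatio, hdiv, ceil_intCast_mul_goldenRatio hm.ne', hceil] at hexists
  split_ifs with h
  · have := hexists.1 h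
    omega
  · have := mt hexists.2 h
    omega

lemma floor_floor_mul_goldenRatio_mul_goldenRatio {k : ℤ} (hk : k ≠ 0) :
    ⌊(⌊k * goldenRatio⌋ : ℝ) * goldenRatio⌋ = ⌊k * goldenRatio⌋ + k - 1 := by
  set a := ⌊k * goldenRatio⌋
  have hlo : k * goldenRatio - 1 < a := Int.sub_one_lt_floor _
  have hhi : (a : ℝ) < k * goldenRatio := (Int.floor_le _).lt_of_ne fun h =>
    (goldenRatio_irrational.intCast_mul hk).ne_int a h.symm
  have hsub : 0 < goldenRatio - 1 := sub_pos.2 one_lt_goldenRatio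
  have hk2 : (k : ℝ) * goldenRatio ^ 2 = k * goldenRatio + k := by rw [goldenRatio_sq]; ring
  rw [Int.floor_eq_iff]
  push_cast
  constructor
  · nlinarith [mul_pos (sub_pos.2 hlo) hsub, goldenRatio_lt_two]
  · nlinarith [mul_pos (sub_pos.2 hhi) hsub]

lemma floor_intCast_mul_goldenRatio_sq (k : ℤ) :
    ⌊k * goldenRatio ^ 2⌋ = ⌊k * goldenRatio⌋ + k := by
  rw [goldenRatio_sq, mul_add, mul_one, Int.floor_add_intCast]

open Classical in
lemma isSelfGenerating_floor_mul_goldenRatio :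
    IsSelfGenerating fun n => ⌊((n : ℝ) + 1) * goldenRatio⌋ - 1 := by
  refine ⟨?_, fun n => ?_⟩
  · have : ⌊goldenRatio⌋ = 1 :=
      Int.floor_eq_iff.2 ⟨by exact_mod_cast one_lt_goldenRatio.le, by norm_num [goldenRatio_lt_two]⟩
    simp [this]
  have hrange : (n : ℤ) ∈ Set.range (fun k : ℕ => ⌊((k : ℝ) + 1) * goldenRatio⌋ - 1) ↔
      ∃ j : ℤ, ⌊j * goldenRatio⌋ = n + 1 := by
    constructor
    · rintro ⟨k, hk⟩
      dsimp only at hk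
      exact ⟨k + 1, by push_cast; omega⟩
    · rintro ⟨j, hj⟩
      have hj0 : 0 < j := by
        by_contra! hj0
        have : ⌊j * goldenRatio⌋ ≤ 0 :=
          Int.floor_nonpos <|
            mul_nonpos_of_nonpos_of_nonneg (by exact_mod_cast hj0) goldenRatio_pos.le
        omega
      obtain ⟨k, rfl⟩ : ∃ k : ℕ, j = k + 1 := ⟨(j - 1).toNat, by omega⟩
      push_cast at hj
      exact ⟨k, by simp only [hj]; ring⟩
  have hstep := floor_add_one_mul_goldenRatio (m := n + 1) (by omega)
  push_cast at hstep ⊢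
  rw [hstep, if_congr hrange rfl rfl]
  ring

end Real

lemma length_fibSub (w : List ℕ) : (fibSub w).length = w.length + w.count 0 := by
  induction w with
  | nil => rfl
  | cons a w ih =>
    by_cases ha : a = 0 <;> simp [fibSub, ha] at ih ⊢ <;> omega

lemma fibSub_append (u v : List ℕ) : fibSub (u ++ v) = fibSub u ++ fibSub v :=
  List.flatMap_append ..

lemma fibSub_drop {w : List ℕ} {i : ℕ} (hi : i < w.length) :
    fibSub (w.drop i) = (if w[i] = 0 then [0, 1] else [0]) ++ fibSub (w.drop (i + 1)) := by
  rw [List.drop_eq_getElem_cons hi]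
  simp only [fibSub, List.flatMap_cons]

lemma List.IsPrefix.fibSub_iterate {u v : List ℕ} (h : u <+: v) (k : ℕ) :
    fibSub^[k] u <+: fibSub^[k] v := by
  induction k with
  | zero => exact h
  | succ k ih =>
    rw [Function.iterate_succ_apply', Function.iterate_succ_apply']
    exact ih.flatMap _

lemma prefix_fibSub_iterate_of_le {k l : ℕ} (h : k ≤ l) : fibSub^[k] [0] <+: fibSub^[l] [0] := by
  induction l, h using Nat.le_induction with
  | base => exact List.prefix_refl _
  | succ l _ ih => exact ih.trans (List.IsPrefix.fibSub_iterate ⟨[1], rfl⟩ l)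

lemma lt_length_fibSub_iterate (k : ℕ) : k < (fibSub^[k] [0]).length := by
  induction k with
  | zero => simp
  | succ k ih =>
    have hzero : 0 < (fibSub^[k] [0]).count 0 :=
      List.count_pos_iff.2 ((prefix_fibSub_iterate_of_le k.zero_le).mem (by simp))
    rw [Function.iterate_succ_apply', length_fibSub]
    omega

lemma getElem?_fibSub_iterate_of_le {j l m : ℕ} (hjl : j ≤ l) (hm : m < (fibSub^[j] [0]).length) :
    (fibSub^[l] [0])[m]? = (fibSub^[j] [0])[m]? := by
  obtain ⟨t, ht⟩ := prefix_fibSub_iterate_of_le hjl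
  rw [← ht, List.getElem?_append_left hm]

lemma fibWord_eq_of_getElem? {k m a : ℕ} (h : (fibSub^[k] [0])[m]? = some a) :
    fibWord m = a := by
  have hm : m < (fibSub^[m + 1] [0]).length :=
    (lt_length_fibSub_iterate (m + 1)).trans' m.lt_succ_self
  rw [fibWord, List.getD_eq_getElem?_getD, ← getElem?_fibSub_iterate_of_le (le_max_left _ k) hm,
    getElem?_fibSub_iterate_of_le (le_max_right _ _) (List.getElem?_eq_some_iff.1 h).1, h]
  rfl

lemma count_take_fibSub_iterate {k i : ℕ} (hi : i ≤ (fibSub^[k] [0]).length) :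
    ((fibSub^[k] [0]).take i).count 0 = Nat.count (fun m => fibWord m = 0) i := by
  induction i with
  | zero => simp
  | succ i ih =>
    have hlt : i < (fibSub^[k] [0]).length := hi
    have hfib : fibWord i = (fibSub^[k] [0])[i] :=
      fibWord_eq_of_getElem? (List.getElem?_eq_getElem hlt)
    rw [List.take_add_one, List.count_append, ih hlt.le, Nat.count_succ,
      List.getElem?_eq_getElem hlt, hfib]
    by_cases h : (fibSub^[k] [0])[i] = 0 <;> simp [h]

/-- Since `fibSub` fixes the Fibonacci word `f`, the image of the letter `f i` occupies `f` from
position `blockStart i` on. -/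
def blockStart (i : ℕ) : ℕ := i + Nat.count (fun m => fibWord m = 0) i

lemma blockStart_succ (i : ℕ) :
    blockStart (i + 1) = blockStart i + 1 + if fibWord i = 0 then 1 else 0 := by
  simp only [blockStart, Nat.count_succ]
  omega

lemma drop_blockStart_fibSub_iterate (i : ℕ) :
    (fibSub^[i + 1] [0]).drop (blockStart i) =
      (if fibWord i = 0 then [0, 1] else [0]) ++ fibSub ((fibSub^[i] [0]).drop (i + 1)) := by
  rw [Function.iterate_succ_apply']
  set w := fibSub^[i] [0]
  have hi : i < w.length := lt_length_fibSub_iterate i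
  have hblock : (fibSub (w.take i)).length = blockStart i := by
    rw [length_fibSub, count_take_fibSub_iterate hi.le, List.length_take, min_eq_left hi.le]
    rfl
  have hfib : fibWord i = w[i] := fibWord_eq_of_getElem? (List.getElem?_eq_getElem hi)
  conv_lhs => rw [← List.take_append_drop i w]
  rw [fibSub_append, List.drop_left' hblock, fibSub_drop hi, hfib]

lemma fibWord_blockStart (i : ℕ) : fibWord (blockStart i) = 0 := by
  apply fibWord_eq_of_getElem? (k := i + 1)
  rw [← add_zero (blockStart i), ← List.getElem?_drop, drop_blockStart_fibSub_iterate]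
  split_ifs <;> rfl

lemma fibWord_blockStart_add_one {i : ℕ} (h : fibWord i = 0) : fibWord (blockStart i + 1) = 1 := by
  apply fibWord_eq_of_getElem? (k := i + 1)
  rw [← List.getElem?_drop, drop_blockStart_fibSub_iterate, if_pos h]
  rfl

lemma strictMono_blockStart : StrictMono blockStart :=
  strictMono_nat_of_lt_succ fun i => by rw [blockStart_succ]; omega

lemma exists_blockStart_eq_or (m : ℕ) :
    (∃ i, blockStart i = m) ∨ ∃ i, fibWord i = 0 ∧ blockStart i + 1 = m := by
  induction m with
  | zero => exact .inl ⟨0, rfl⟩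
  | succ m ih =>
    rcases ih with ⟨i, rfl⟩ | ⟨i, hi, rfl⟩
    · by_cases hi : fibWord i = 0
      · exact .inr ⟨i, hi, rfl⟩
      · exact .inl ⟨i + 1, by rw [blockStart_succ, if_neg hi]⟩
    · exact .inl ⟨i + 1, by rw [blockStart_succ, if_pos hi]⟩

lemma fibWord_eq_zero_iff (m : ℕ) : fibWord m = 0 ↔ m ∈ Set.range blockStart := by
  refine ⟨fun h => ?_, fun ⟨i, hi⟩ => hi ▸ fibWord_blockStart i⟩
  rcases exists_blockStart_eq_or m with hm | ⟨i, hi, rfl⟩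
  · exact hm
  · rw [fibWord_blockStart_add_one hi] at h
    cases h

lemma fibWord_eq_one_iff (m : ℕ) :
    fibWord m = 1 ↔ m ∈ Set.range fun j => blockStart (blockStart j) + 1 := by
  refine ⟨fun h => ?_, fun ⟨j, hj⟩ => hj ▸ fibWord_blockStart_add_one (fibWord_blockStart j)⟩
  rcases exists_blockStart_eq_or m with ⟨i, rfl⟩ | ⟨i, hi, rfl⟩
  · rw [fibWord_blockStart] at h
    cases h
  · obtain ⟨j, rfl⟩ := (fibWord_eq_zero_iff i).1 hi
    exact ⟨j, rfl⟩

lemma nth_fibWord_eq_zero : Nat.nth (fun m => fibWord m = 0) = blockStart :=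
  Nat.nth_eq_of_strictMono strictMono_blockStart fibWord_eq_zero_iff

lemma nth_fibWord_eq_one :
    Nat.nth (fun m => fibWord m = 1) = fun j => blockStart (blockStart j) + 1 :=
  Nat.nth_eq_of_strictMono (strictMono_blockStart.comp strictMono_blockStart |>.add_const 1)
    fibWord_eq_one_iff

open Classical in
lemma isSelfGenerating_blockStart : IsSelfGenerating fun n => (blockStart n : ℤ) := by
  refine ⟨by simp [blockStart], fun n => ?_⟩
  have hrange : (n : ℤ) ∈ Set.range (fun k => (blockStart k : ℤ)) ↔ fibWord n = 0 := by
    simp [fibWord_eq_zero_iff]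
  dsimp only
  rw [blockStart_succ, if_congr hrange rfl rfl]
  push_cast
  rfl

lemma blockStart_eq_floor (i : ℕ) :
    (blockStart i : ℤ) = ⌊((i : ℝ) + 1) * Real.goldenRatio⌋ - 1 :=
  congrFun (isSelfGenerating_blockStart.unique Real.isSelfGenerating_floor_mul_goldenRatio) i

/-- In the Fibonacci word, the position of the n-th `0` is ⌊nφ⌋ and the position of
the n-th `1` is ⌊nφ²⌋. -/
theorem fib_word_positions (n : ℕ) (hn : 1 ≤ n) :
    (fibPos 0 n : ℤ) = ⌊(n : ℝ) * φ⌋ ∧ (fibPos 1 n : ℤ) = ⌊(n : ℝ) * φ ^ 2⌋ := by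
  obtain ⟨m, rfl⟩ : ∃ m, n = m + 1 := ⟨n - 1, by omega⟩
  have hzero := blockStart_eq_floor m
  have hone := blockStart_eq_floor (blockStart m)
  have hcast : (blockStart m : ℝ) + 1 = ⌊((m : ℝ) + 1) * Real.goldenRatio⌋ := by
    exact_mod_cast (by omega : (blockStart m : ℤ) + 1 = ⌊((m : ℝ) + 1) * Real.goldenRatio⌋)
  have hfloor := Real.floor_floor_mul_goldenRatio_mul_goldenRatio (k := m + 1) (by omega)
  have hsq := Real.floor_intCast_mul_goldenRatio_sq (m + 1)
  push_cast at hfloor hsq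
  rw [hcast, hfloor] at hone
  simp only [fibPos, nth_fibWord_eq_zero, nth_fibWord_eq_one, Nat.add_sub_cancel,
    show φ = Real.goldenRatio from rfl]
  push_cast
  omega
end

section
/- In the k-bonacci word (k ≥ 2), every letter j > 0 is isolated: each occurrence of j is immediately preceded and immediately followed by the letter 0. -/
/-- The k-bonacci substitution on the alphabet {0,…,k−1}: j ↦ 0(j+1) for j < k−1,
and k−1 ↦ 0; applied letterwise to a word. -/
def subW (k : ℕ) (w : List ℕ) : List ℕ :=
  w.flatMap (fun j => if j + 1 < k then [0, j + 1] else [0])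

/-- The k-bonacci word (0-indexed), the fixed point of the k-bonacci substitution
starting with 0. -/
def kbonacci (k n : ℕ) : ℕ := ((subW k)^[n + 1] [0]).getD n 0

lemma subW_cons (k a : ℕ) (t : List ℕ) :
    subW k (a :: t) = (if a + 1 < k then [0, a + 1] else [0]) ++ subW k t := by
  simp [subW]

lemma subW_append (k : ℕ) (a b : List ℕ) :
    subW k (a ++ b) = subW k a ++ subW k b := by
  simp [subW]

lemma subW_getD_zero (k : ℕ) (v : List ℕ) : (subW k v).getD 0 0 = 0 := by
  cases v with
  | nil => rfl
  | cons a t => rw [subW_cons]; split <;> rfl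

lemma subW_length_ge (k : ℕ) (v : List ℕ) : v.length ≤ (subW k v).length := by
  induction v with
  | nil => simp
  | cons a t ih => rw [subW_cons]; split <;> simp <;> omega

lemma subW_struct (k : ℕ) (v : List ℕ) : ∀ n, (subW k v).getD n 0 ≠ 0 →
    0 < n ∧ (subW k v).getD (n - 1) 0 = 0 ∧ (subW k v).getD (n + 1) 0 = 0 := by
  induction v with
  | nil => intro n hn; simp [subW] at hn
  | cons a t ih =>
    intro n hn
    rw [subW_cons] at hn ⊢
    by_cases hak : a + 1 < k
    · simp only [if_pos hak, List.cons_append] at hn ⊢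
      match n with
      | 0 => simp at hn
      | 1 =>
        refine ⟨one_pos, by simp, ?_⟩
        simpa using subW_getD_zero k t
      | (m + 2) =>
        obtain ⟨hm, h1, h2⟩ := ih m (by simpa using hn)
        refine ⟨by omega, ?_, by simpa using h2⟩
        obtain ⟨p, rfl⟩ : ∃ p, m = p + 1 := ⟨m - 1, by omega⟩
        simpa using h1
    · simp only [if_neg hak, List.cons_append] at hn ⊢
      match n with
      | 0 => simp at hn
      | (m + 1) =>
        obtain ⟨hm, h1, h2⟩ := ih m (by simpa using hn)
        refine ⟨by omega, ?_, by simpa using h2⟩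
        obtain ⟨p, rfl⟩ : ∃ p, m = p + 1 := ⟨m - 1, by omega⟩
        simpa using h1

lemma subW_prefix (k : ℕ) {a b : List ℕ} (h : a <+: b) :
    subW k a <+: subW k b := by
  obtain ⟨t, rfl⟩ := h
  exact ⟨subW k t, (subW_append k a t).symm⟩

lemma iter_prefix_succ (k m : ℕ) :
    (subW k)^[m] [0] <+: (subW k)^[m + 1] [0] := by
  induction m with
  | zero =>
    by_cases h : 1 < k
    · exact ⟨[1], by simp [subW, h]⟩
    · exact ⟨[], by simp [subW, h]⟩
  | succ m ih =>
    rw [Function.iterate_succ_apply', Function.iterate_succ_apply']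
    exact subW_prefix k ih

lemma iter_prefix_mono (k : ℕ) {m m' : ℕ} (h : m ≤ m') :
    (subW k)^[m] [0] <+: (subW k)^[m'] [0] := by
  induction m', h using Nat.le_induction with
  | base => exact List.prefix_rfl
  | succ m' hm ih => exact ih.trans (iter_prefix_succ k m')

lemma iter_length_ge (k : ℕ) (hk : 2 ≤ k) : ∀ m, m + 1 ≤ ((subW k)^[m] [0]).length := by
  intro m
  induction m with
  | zero => simp
  | succ m ih =>
    obtain ⟨t, ht⟩ := iter_prefix_mono k (Nat.zero_le m)
    rw [Function.iterate_zero_apply] at ht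
    rw [Function.iterate_succ_apply', ← ht]
    have h01 : (0 : ℕ) + 1 < k := by omega
    rw [show ([0] : List ℕ) ++ t = 0 :: t from rfl, subW_cons, if_pos h01]
    have := subW_length_ge k t
    have hlen : m + 1 ≤ ([0] ++ t : List ℕ).length := ht ▸ ih
    simp at hlen ⊢
    omega

lemma getD_of_prefix {a b : List ℕ} (h : a <+: b) {n : ℕ} (hn : n < a.length) :
    b.getD n 0 = a.getD n 0 := by
  obtain ⟨t, rfl⟩ := h
  rw [List.getD_append _ _ _ _ hn]

lemma kbonacci_eq (k : ℕ) (hk : 2 ≤ k) (n m : ℕ) (h : n + 1 ≤ m) :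
    kbonacci k n = ((subW k)^[m] [0]).getD n 0 := by
  unfold kbonacci
  exact (getD_of_prefix (iter_prefix_mono k h)
    (by have := iter_length_ge k hk (n + 1); omega)).symm

/-- In the k-bonacci word, every letter j > 0 is isolated: each occurrence of j is
immediately preceded and immediately followed by the letter 0. -/
theorem kbonacci_isolated (k : ℕ) (hk : 2 ≤ k) (j : ℕ) (hj : 0 < j) (hjk : j < k)
    (n : ℕ) (h : kbonacci k n = j) :
    0 < n ∧ kbonacci k (n - 1) = 0 ∧ kbonacci k (n + 1) = 0 := by
  have hiter : (subW k)^[n + 2] [0] = subW k ((subW k)^[n + 1] [0]) :=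
    Function.iterate_succ_apply' (subW k) (n + 1) [0]
  have key : (subW k ((subW k)^[n + 1] [0])).getD n 0 ≠ 0 := by
    rw [← hiter, ← kbonacci_eq k hk n (n + 2) (by omega), h]
    omega
  obtain ⟨hn, h1, h2⟩ := subW_struct k ((subW k)^[n + 1] [0]) n key
  rw [← hiter] at h1 h2
  refine ⟨hn, ?_, ?_⟩
  · rw [kbonacci_eq k hk (n - 1) (n + 2) (by omega)]; exact h1
  · rw [kbonacci_eq k hk (n + 1) (n + 2) (by omega)]; exact h2
end

section
/- Let w_j be the prefix of θ^j(0) of length 2^j − 1 (so θ^j(0) = w_j · j). Then w_{j+1} = w_j · j · w_j for all 0 ≤ j ≤ k−2, and consequently each w_j is a palindrome. -/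
/-- `wword k j` is the prefix w_j of θ^j(0), i.e. θ^j(0) with its last letter removed
(it has length 2^j − 1, and θ^j(0) = w_j · j). -/
def wword (k j : ℕ) : List ℕ := ((subW k)^[j] [0]).dropLast

def ww : ℕ → List ℕ
  | 0 => []
  | j + 1 => ww j ++ [j] ++ ww j

lemma subW_ww (k : ℕ) : ∀ j, j ≤ k - 1 → subW k (ww j) ++ [0] = ww j ++ [j] ++ ww j := by
  intro j
  induction j with
  | zero => intro _; simp [ww, subW]
  | succ j ih =>
    intro hj
    have hjk : j + 1 < k := by omega
    have ih' := ih (by omega)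
    show subW k (ww j ++ [j] ++ ww j) ++ [0] = _
    rw [subW_append, subW_append]
    have : subW k [j] = [0, j + 1] := by simp [subW, hjk]
    rw [this]
    have : subW k (ww j) ++ [0, j+1] ++ subW k (ww j) ++ [0]
        = (subW k (ww j) ++ [0]) ++ [j+1] ++ (subW k (ww j) ++ [0]) := by
      simp
    rw [this, ih']
    show _ = ww (j+1) ++ [j+1] ++ ww (j+1)
    simp [ww]

lemma iter_ww (k : ℕ) : ∀ j, j ≤ k - 1 → (subW k)^[j] [0] = ww j ++ [j] := by
  intro j
  induction j with
  | zero => intro _; simp [ww]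
  | succ j ih =>
    intro hj
    have hjk : j + 1 < k := by omega
    rw [Function.iterate_succ_apply', ih (by omega), subW_append]
    have h1 : subW k [j] = [0, j + 1] := by simp [subW, hjk]
    rw [h1]
    have h2 : subW k (ww j) ++ [0, j+1] = (subW k (ww j) ++ [0]) ++ [j+1] := by simp
    rw [h2, subW_ww k j (by omega)]
    simp [ww]

lemma wword_eq (k : ℕ) (j : ℕ) (hj : j ≤ k - 1) : wword k j = ww j := by
  rw [wword, iter_ww k j hj]
  simp

lemma ww_pal : ∀ j, (ww j).reverse = ww j := by
  intro j
  induction j with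
  | zero => simp [ww]
  | succ j ih => simp [ww, ih]

/-- w_{j+1} = w_j · j · w_j for 0 ≤ j ≤ k−2, and consequently each w_j is a palindrome. -/
theorem wword_rec_and_palindrome (k : ℕ) (hk : 2 ≤ k) :
    (∀ j, j ≤ k - 2 → wword k (j + 1) = wword k j ++ [j] ++ wword k j) ∧
    (∀ j, j ≤ k - 1 → (wword k j).reverse = wword k j) := by
  constructor
  · intro j hj
    rw [wword_eq k (j+1) (by omega), wword_eq k j (by omega)]
    rfl
  · intro j hj
    rw [wword_eq k j hj, ww_pal]
end

section
/- In the k-bonacci word, every occurrence of the letter j is preceded and followed by the word w_j, where w_j is the prefix of θ^j(0) of length 2^j − 1. -/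
namespace KB

def blk (k a : ℕ) : List ℕ := if a + 1 < k then [0, a + 1] else [0]

lemma subW_cons (k a : ℕ) (t : List ℕ) : subW k (a :: t) = blk k a ++ subW k t := by
  simp [subW, blk, List.flatMap_cons]

lemma subW_nil (k : ℕ) : subW k [] = [] := rfl

lemma subW_append (k : ℕ) (u v : List ℕ) : subW k (u ++ v) = subW k u ++ subW k v := by
  simp [subW, List.flatMap_append]

lemma blk_small (k a : ℕ) (h : a + 1 < k) : blk k a = [0, a + 1] := if_pos h

lemma length_le_subW (k : ℕ) (u : List ℕ) : u.length ≤ (subW k u).length := by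
  induction u with
  | nil => simp [subW_nil]
  | cons a t ih =>
    rw [subW_cons]
    have : 1 ≤ (blk k a).length := by unfold blk; split <;> simp
    simp only [List.length_cons, List.length_append]
    omega

def W (k M : ℕ) : List ℕ := (subW k)^[M] [0]

lemma W_succ (k M : ℕ) : W k (M + 1) = subW k (W k M) := Function.iterate_succ_apply' ..

lemma W_zero (k : ℕ) : W k 0 = [0] := rfl

lemma W_cons (k : ℕ) (M : ℕ) : ∃ t, W k M = 0 :: t := by
  induction M with
  | zero => exact ⟨[], rfl⟩
  | succ M ih =>
    obtain ⟨t, ht⟩ := ih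
    rw [W_succ, ht, subW_cons]
    unfold blk
    split <;> exact ⟨_, rfl⟩

lemma length_W (k : ℕ) (hk : 2 ≤ k) (M : ℕ) : M + 1 ≤ (W k M).length := by
  induction M with
  | zero => simp [W_zero]
  | succ M ih =>
    obtain ⟨t, ht⟩ := W_cons k M
    have h1 : (0:ℕ) + 1 < k := by omega
    rw [W_succ, ht, subW_cons, blk_small k 0 h1]
    have h2 := length_le_subW k t
    have h3 : (W k M).length = t.length + 1 := by rw [ht]; rfl
    simp only [List.length_append, List.length_cons] at *
    omega

lemma subW_prefix (k : ℕ) {u v : List ℕ} (h : u <+: v) : subW k u <+: subW k v := by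
  obtain ⟨w, rfl⟩ := h
  exact ⟨subW k w, (subW_append k u w).symm⟩

lemma W_prefix_succ (k : ℕ) (hk : 2 ≤ k) (M : ℕ) : W k M <+: W k (M + 1) := by
  induction M with
  | zero =>
    rw [W_zero]
    show [0] <+: W k 1
    rw [show W k 1 = subW k [0] from rfl, subW_cons, blk_small k 0 (by omega)]
    exact ⟨[1] ++ subW k [], by simp⟩
  | succ M ih =>
    rw [W_succ, W_succ]
    exact subW_prefix k ih

lemma W_prefix (k : ℕ) (hk : 2 ≤ k) {M N : ℕ} (h : M ≤ N) : W k M <+: W k N := by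
  induction N with
  | zero => rw [Nat.le_zero.mp h]
  | succ N ih =>
    rcases Nat.lt_or_ge M (N+1) with h' | h'
    · exact (ih (by omega)).trans (W_prefix_succ k hk N)
    · rw [show M = N + 1 by omega]

lemma prefix_getD {u v : List ℕ} (h : u <+: v) {n : ℕ} (hn : n < u.length) :
    v.getD n 0 = u.getD n 0 := by
  obtain ⟨w, rfl⟩ := h
  rw [List.getD_append _ _ _ _ hn]

lemma kb_eq (k : ℕ) (hk : 2 ≤ k) (M n : ℕ) (h : n < (W k M).length) :
    kbonacci k n = (W k M).getD n 0 := by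
  rcases Nat.le_total M (n + 1) with h' | h'
  · have hp := W_prefix k hk h'
    rw [kbonacci]
    show (W k (n+1)).getD n 0 = (W k M).getD n 0
    exact prefix_getD hp h
  · have hp := W_prefix k hk h'
    have hn : n < (W k (n+1)).length := by have := length_W k hk (n+1); omega
    rw [kbonacci]
    show (W k (n+1)).getD n 0 = (W k M).getD n 0
    rw [prefix_getD hp hn]

/-- prefix of the k-bonacci word -/
def tk (k m : ℕ) : List ℕ := (List.range m).map (kbonacci k)

lemma tk_length (k m : ℕ) : (tk k m).length = m := by simp [tk]

lemma tk_succ (k m : ℕ) : tk k (m + 1) = tk k m ++ [kbonacci k m] := by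
  simp [tk, List.range_succ]

lemma tk_getD (k : ℕ) {m i : ℕ} (h : i < m) : (tk k m).getD i 0 = kbonacci k i := by
  rw [tk, List.getD_eq_getElem _ _ (by simpa using h)]
  simp

lemma tk_eq_take (k : ℕ) (hk : 2 ≤ k) {m M : ℕ} (h : m ≤ (W k M).length) :
    tk k m = (W k M).take m := by
  apply List.ext_getElem
  · simp [tk_length, h]
  · intro i h1 h2
    have him : i < m := by simpa [tk_length] using h1
    have hiW : i < (W k M).length := by omega
    rw [List.getElem_take]
    rw [← List.getD_eq_getElem (tk k m) 0 h1, tk_getD k him,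
      ← List.getD_eq_getElem (W k M) 0 hiW]
    exact kb_eq k hk M i hiW

lemma tk_prefix (k : ℕ) (hk : 2 ≤ k) (m : ℕ) : ∃ M, tk k m <+: W k M := by
  refine ⟨m, ?_⟩
  rw [tk_eq_take k hk (M := m) (by have := length_W k hk m; omega)]
  exact List.take_prefix _ _

/-- the bridge: σ applied to a prefix of ω is a prefix of ω -/
lemma bridge (k : ℕ) (hk : 2 ≤ k) (m r : ℕ) (hr : r < (subW k (tk k m)).length) :
    kbonacci k r = (subW k (tk k m)).getD r 0 := by
  obtain ⟨M, hM⟩ := tk_prefix k hk m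
  have h2 : subW k (tk k m) <+: W k (M + 1) := by
    rw [W_succ]; exact subW_prefix k hM
  have h3 : r < (W k (M+1)).length := lt_of_lt_of_le hr h2.length_le
  rw [kb_eq k hk (M+1) r h3, prefix_getD h2 hr]

def P (k m : ℕ) : ℕ := (subW k (tk k m)).length

lemma subW_tk_succ (k m : ℕ) :
    subW k (tk k (m + 1)) = subW k (tk k m) ++ blk k (kbonacci k m) := by
  rw [tk_succ, subW_append, subW_cons, subW_nil, List.append_nil]

lemma P_succ (k m : ℕ) : P k (m + 1) = P k m + (blk k (kbonacci k m)).length := by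
  rw [P, P, subW_tk_succ, List.length_append]

lemma P_succ_small (k m : ℕ) (h : kbonacci k m + 1 < k) : P k (m + 1) = P k m + 2 := by
  rw [P_succ, blk_small _ _ h]
  rfl

lemma le_P (k m : ℕ) : m ≤ P k m := by
  have := length_le_subW k (tk k m)
  rw [tk_length] at this
  exact this


lemma getD_append_len (u v : List ℕ) (n i : ℕ) (hn : n = u.length) :
    (u ++ v).getD (n + i) 0 = v.getD i 0 := by
  subst hn
  rw [List.getD_append_right u v 0 (u.length + i) (by omega)]
  congr 1
  omega

/-- value at start of a block -/
lemma kb_P (k : ℕ) (hk : 2 ≤ k) (m : ℕ) : kbonacci k (P k m) = 0 := by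
  have hb : ∃ t, blk k (kbonacci k m) = 0 :: t := by
    unfold blk; split <;> exact ⟨_, rfl⟩
  obtain ⟨t, ht⟩ := hb
  have hr : P k m < (subW k (tk k (m+1))).length := by
    rw [subW_tk_succ, List.length_append, ht]; simp [P]
  have h0 : (subW k (tk k m) ++ blk k (kbonacci k m)).getD (P k m + 0) 0
      = (blk k (kbonacci k m)).getD 0 0 := getD_append_len _ _ _ _ rfl
  rw [bridge k hk (m+1) _ hr, subW_tk_succ]
  simpa [ht] using h0

/-- value at second letter of a small block -/
lemma kb_P_one (k : ℕ) (hk : 2 ≤ k) (m : ℕ) (h : kbonacci k m + 1 < k) :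
    kbonacci k (P k m + 1) = kbonacci k m + 1 := by
  have hb := blk_small k (kbonacci k m) h
  have hr : P k m + 1 < (subW k (tk k (m+1))).length := by
    rw [subW_tk_succ, List.length_append, hb]; simp [P]
  have h0 : (subW k (tk k m) ++ blk k (kbonacci k m)).getD (P k m + 1) 0
      = (blk k (kbonacci k m)).getD 1 0 := getD_append_len _ _ _ _ rfl
  rw [bridge k hk (m+1) _ hr, subW_tk_succ, h0, hb]
  rfl

/-- P over a range of small letters -/
lemma P_add_small (k : ℕ) (a d : ℕ) (h : ∀ i, a ≤ i → i < a + d → kbonacci k i + 1 < k) :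
    P k (a + d) = P k a + 2 * d := by
  induction d with
  | zero => simp
  | succ d ih =>
    rw [show a + (d+1) = (a+d) + 1 by ring, P_succ_small k _ (h _ (by omega) (by omega)),
      ih (fun i h1 h2 => h i h1 (by omega))]
    ring

lemma blk_big (k a : ℕ) (h : ¬ a + 1 < k) : blk k a = [0] := if_neg h

lemma exists_block (k : ℕ) (u : List ℕ) : ∀ n j, n < (subW k u).length →
    (subW k u).getD n 0 = j → 1 ≤ j →
    ∃ m, m < u.length ∧ n = (subW k (u.take m)).length + 1 ∧ u.getD m 0 + 1 = j ∧ j < k := by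
  induction u with
  | nil => intro n j hn _ _; simp [subW_nil] at hn
  | cons a t ih =>
    intro n j hn hj hj1
    rw [subW_cons] at hn hj
    by_cases ha : a + 1 < k
    · rw [blk_small _ _ ha] at hn hj
      match n with
      | 0 => simp at hj; omega
      | 1 =>
        have hv : (([0, a+1] : List ℕ) ++ subW k t).getD 1 0 = a + 1 := by
          rw [List.getD_append _ _ _ _ (by norm_num)]; rfl
        refine ⟨0, by simp, by simp [subW_nil], ?_, ?_⟩
        · rw [hv] at hj; simpa using hj
        · rw [hv] at hj; omega
      | (n+2) =>
        have hj' : (subW k t).getD n 0 = j := by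
          rw [← hj, show n + 2 = 2 + n from by omega]
          exact (getD_append_len [0, a+1] (subW k t) 2 n rfl).symm
        have hn' : n < (subW k t).length := by
          simp only [List.length_append, List.length_cons, List.length_nil] at hn; omega
        obtain ⟨m, hm1, hm2, hm3, hm4⟩ := ih n j hn' hj' hj1
        refine ⟨m + 1, by simpa using hm1, ?_, by simpa using hm3, hm4⟩
        rw [List.take_succ_cons, subW_cons, blk_small _ _ ha, List.length_append]
        simp only [List.length_cons, List.length_nil]
        omega
    · rw [blk_big _ _ ha] at hn hj
      match n with
      | 0 => simp at hj; omega
      | (n+1) =>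
        have hj' : (subW k t).getD n 0 = j := by
          rw [← hj, show n + 1 = 1 + n from by omega]
          exact (getD_append_len [0] (subW k t) 1 n rfl).symm
        have hn' : n < (subW k t).length := by
          simp only [List.length_append, List.length_cons, List.length_nil] at hn; omega
        obtain ⟨m, hm1, hm2, hm3, hm4⟩ := ih n j hn' hj' hj1
        refine ⟨m + 1, by simpa using hm1, ?_, by simpa using hm3, hm4⟩
        rw [List.take_succ_cons, subW_cons, blk_big _ _ ha, List.length_append]
        simp only [List.length_cons, List.length_nil]
        omega

lemma exists_preimage (k : ℕ) (hk : 2 ≤ k) (n j : ℕ) (h : kbonacci k n = j) (hj1 : 1 ≤ j) :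
    ∃ m, kbonacci k m = j - 1 ∧ n = P k m + 1 ∧ j < k := by
  have hn : n < P k (n + 1) := lt_of_lt_of_le (by omega) (le_P k (n + 1))
  have hval : (subW k (tk k (n+1))).getD n 0 = j := by
    rw [← bridge k hk (n+1) n hn]; exact h
  obtain ⟨m, hm1, hm2, hm3, hm4⟩ := exists_block k (tk k (n+1)) n j hn hval hj1
  have hmn : m < n + 1 := by simpa [tk_length] using hm1
  have htake : (tk k (n+1)).take m = tk k m := by
    simp [tk, ← List.map_take, List.take_range, Nat.min_eq_left (le_of_lt hmn)]
  refine ⟨m, ?_, ?_, hm4⟩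
  · rw [tk_getD k hmn] at hm3; omega
  · rw [hm2, htake]; rfl

lemma mem_subW (k : ℕ) {x : ℕ} {u : List ℕ} (hx : x ∈ subW k u) :
    x = 0 ∨ ∃ y ∈ u, x = y + 1 := by
  rw [subW, List.mem_flatMap] at hx
  obtain ⟨a, ha, hx⟩ := hx
  split at hx
  · simp only [List.mem_cons, List.mem_singleton, List.not_mem_nil, or_false] at hx
    rcases hx with h | h
    · exact Or.inl h
    · exact Or.inr ⟨a, ha, h⟩
  · simp only [List.mem_singleton] at hx
    exact Or.inl hx

lemma W_decomp (k : ℕ) (hk : 2 ≤ k) :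
    ∀ j, j < k → W k j = wword k j ++ [j] ∧ ∀ x ∈ wword k j, x < j := by
  have key : ∀ j, j < k → ∃ u, W k j = u ++ [j] ∧ ∀ x ∈ u, x < j := by
    intro j
    induction j with
    | zero => intro _; exact ⟨[], rfl, by simp⟩
    | succ j ih =>
      intro hj
      obtain ⟨u, hu, hsmall⟩ := ih (by omega)
      refine ⟨subW k u ++ [0], ?_, ?_⟩
      · rw [W_succ, hu, subW_append, subW_cons, subW_nil, blk_small _ _ hj]
        simp
      · intro x hx
        rcases List.mem_append.mp hx with hx | hx
        · rcases mem_subW k hx with h | ⟨y, hy, h⟩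
          · omega
          · have := hsmall y hy; omega
        · simp at hx; omega
  intro j hj
  obtain ⟨u, hu, hsmall⟩ := key j hj
  have hw : wword k j = u := by
    show (W k j).dropLast = u
    rw [hu, List.dropLast_concat]
  exact ⟨by rw [hw, hu], by rw [hw]; exact hsmall⟩

lemma wword_small (k : ℕ) (hk : 2 ≤ k) {j : ℕ} (hj : j < k) :
    ∀ x ∈ wword k j, x + 1 < k := by
  intro x hx
  have := (W_decomp k hk j hj).2 x hx
  omega

lemma wword_succ (k : ℕ) (hk : 2 ≤ k) {j : ℕ} (hj : j + 1 < k) :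
    wword k (j + 1) = subW k (wword k j) ++ [0] := by
  have h1 := (W_decomp k hk j (by omega)).1
  have h2 := (W_decomp k hk (j+1) hj).1
  have h3 : W k (j+1) = (subW k (wword k j) ++ [0]) ++ [j+1] := by
    rw [W_succ, h1, subW_append, subW_cons, subW_nil, blk_small _ _ hj]
    simp
  have := h2.symm.trans h3
  exact List.append_inj_left' this rfl

lemma subW_small_length (k : ℕ) (v : List ℕ) (hv : ∀ x ∈ v, x + 1 < k) :
    (subW k v).length = 2 * v.length := by
  induction v with
  | nil => simp [subW_nil]
  | cons a t ih =>
    rw [subW_cons, blk_small _ _ (hv a (by simp)), List.length_append,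
      ih (fun x hx => hv x (by simp [hx]))]
    simp; ring

lemma subW_small_getD (k : ℕ) (v : List ℕ) (hv : ∀ x ∈ v, x + 1 < k) :
    ∀ i < v.length, (subW k v).getD (2*i) 0 = 0 ∧
      (subW k v).getD (2*i+1) 0 = v.getD i 0 + 1 := by
  induction v with
  | nil => simp
  | cons a t ih =>
    intro i hi
    rw [subW_cons, blk_small _ _ (hv a (by simp))]
    match i with
    | 0 => exact ⟨rfl, rfl⟩
    | (i+1) =>
      have h2 : 2 * (i+1) = 2 + 2*i := by ring
      rw [h2, Nat.add_assoc, getD_append_len [0,a+1] _ 2 (2*i) rfl,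
        getD_append_len [0,a+1] _ 2 (2*i+1) rfl, List.getD_cons_succ]
      exact ih (fun x hx => hv x (by simp [hx])) i (by simpa using hi)

lemma length_W_pow (k : ℕ) (hk : 2 ≤ k) : ∀ j, j < k → (W k j).length = 2 ^ j := by
  intro j
  induction j with
  | zero => intro _; rfl
  | succ j ih =>
    intro hj
    have hsm : ∀ x ∈ W k j, x + 1 < k := by
      intro x hx
      rw [(W_decomp k hk j (by omega)).1] at hx
      rcases List.mem_append.mp hx with hx | hx
      · exact wword_small k hk (by omega) x hx
      · simp at hx; omega
    rw [W_succ, subW_small_length k _ hsm, ih (by omega), pow_succ]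
    ring

lemma length_wword (k : ℕ) (hk : 2 ≤ k) {j : ℕ} (hj : j < k) :
    (wword k j).length = 2 ^ j - 1 := by
  have h1 := (W_decomp k hk j hj).1
  have h2 := length_W_pow k hk j hj
  rw [h1, List.length_append] at h2
  simp at h2
  omega

lemma main_aux (k : ℕ) (hk : 2 ≤ k) :
    ∀ j, j < k → ∀ n, kbonacci k n = j →
    2 ^ j - 1 ≤ n ∧
    (∀ i, i < 2 ^ j - 1 →
      kbonacci k (n - (2 ^ j - 1) + i) = (wword k j).getD i 0 ∧
      kbonacci k (n + 1 + i) = (wword k j).getD i 0) := by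
  intro j
  induction j with
  | zero =>
    intro _ n _
    exact ⟨by norm_num, fun i hi => by norm_num at hi⟩
  | succ j ih =>
    intro hj n h
    obtain ⟨m, hm, hnP, _⟩ := exists_preimage k hk n (j+1) h (by omega)
    rw [Nat.add_sub_cancel] at hm
    obtain ⟨hL, hsur⟩ := ih (by omega) m hm
    set L := 2 ^ j - 1 with hLdef
    have hpow : 1 ≤ 2 ^ j := Nat.one_le_two_pow
    have hL' : 2 ^ (j+1) - 1 = 2 * L + 1 := by rw [pow_succ]; omega
    have hlen : (wword k j).length = L := length_wword k hk (by omega)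
    have hwsm : ∀ x ∈ wword k j, x + 1 < k := wword_small k hk (by omega)
    -- smallness of all letters in [m-L, m+1+L)
    have hsmall : ∀ i, m - L ≤ i → i < m + 1 + L → kbonacci k i + 1 < k := by
      intro i h1 h2
      rcases lt_trichotomy i m with hc | hc | hc
      · have hv := (hsur (i - (m - L)) (by omega)).1
        rw [show m - L + (i - (m - L)) = i from by omega] at hv
        refine hwsm _ ?_
        rw [hv, List.getD_eq_getElem _ _ (by omega)]
        exact List.getElem_mem _
      · rw [hc, hm]; omega
      · have hv := (hsur (i - (m + 1)) (by omega)).2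
        rw [show m + 1 + (i - (m + 1)) = i from by omega] at hv
        refine hwsm _ ?_
        rw [hv, List.getD_eq_getElem _ _ (by omega)]
        exact List.getElem_mem _
    have hPm : P k m = P k (m - L) + 2 * L := by
      have h0 := P_add_small k (m - L) L (fun i h1 h2 => hsmall i h1 (by omega))
      rw [show m - L + L = m from by omega] at h0
      exact h0
    have hn2 : n = P k (m - L) + 2 * L + 1 := by omega
    -- facts about wword k (j+1)
    have hw' : wword k (j+1) = subW k (wword k j) ++ [0] := wword_succ k hk hj
    have hlen2 : (subW k (wword k j)).length = 2 * L := by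
      rw [subW_small_length k _ hwsm, hlen]
    have gA : ∀ t, t < L → (wword k (j+1)).getD (2*t) 0 = 0 ∧
        (wword k (j+1)).getD (2*t+1) 0 = (wword k j).getD t 0 + 1 := by
      intro t ht
      have := subW_small_getD k _ hwsm t (by omega)
      rw [hw']
      constructor
      · rw [List.getD_append _ _ _ _ (by omega)]; exact this.1
      · rw [List.getD_append _ _ _ _ (by omega)]; exact this.2
    have gB : (wword k (j+1)).getD (2*L) 0 = 0 := by
      rw [hw']
      have := getD_append_len (subW k (wword k j)) [0] (2*L) 0 hlen2.symm
      simpa using this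
    -- the key computation
    have key : ∀ a, (∀ t, t < L → kbonacci k (a + t) = (wword k j).getD t 0) →
        (∀ i, a ≤ i → i < a + L → kbonacci k i + 1 < k) →
        ∀ i, i < 2 * L + 1 → kbonacci k (P k a + i) = (wword k (j+1)).getD i 0 := by
      intro a hval hsm i hi
      have hPt : ∀ t, t ≤ L → P k (a + t) = P k a + 2 * t := fun t ht =>
        P_add_small k a t (fun i h1 h2 => hsm i h1 (by omega))
      rcases Nat.even_or_odd i with ⟨t, ht⟩ | ⟨t, ht⟩
      · have htL : t ≤ L := by omega
        rw [show P k a + i = P k (a + t) from by rw [hPt t htL]; omega, kb_P k hk]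
        rcases eq_or_lt_of_le htL with hEq | hlt
        · rw [show i = 2 * L from by omega]; exact gB.symm
        · rw [show i = 2 * t from by omega]; exact ((gA t hlt).1).symm
      · have htL : t < L := by omega
        rw [show P k a + i = P k (a + t) + 1 from by rw [hPt t (le_of_lt htL)]; omega,
          kb_P_one k hk _ (hsm (a + t) (by omega) (by omega)), hval t htL,
          show i = 2 * t + 1 from by omega]
        exact ((gA t htL).2).symm
    have hPsucc : P k (m + 1) = P k m + 2 := P_succ_small k m (by rw [hm]; omega)
    refine ⟨by omega, ?_⟩
    intro i hi
    rw [hL'] at hi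
    constructor
    · rw [show n - (2 ^ (j+1) - 1) + i = P k (m - L) + i from by omega]
      exact key (m - L) (fun t ht => (hsur t ht).1)
        (fun i h1 h2 => hsmall i h1 (by omega)) i hi
    · rw [show n + 1 + i = P k (m + 1) + i from by omega]
      exact key (m + 1) (fun t ht => (hsur t ht).2)
        (fun i h1 h2 => hsmall i (by omega) (by omega)) i hi

end KB

/-- In the k-bonacci word, every occurrence of the letter j is immediately
preceded and immediately followed by the word w_j. -/
theorem kbonacci_letter_surrounded (k j : ℕ) (hk : 2 ≤ k) (hj : j < k)
    (n : ℕ) (h : kbonacci k n = j) :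
    2 ^ j - 1 ≤ n ∧
    (∀ i, i < 2 ^ j - 1 →
      kbonacci k (n - (2 ^ j - 1) + i) = (wword k j).getD i 0 ∧
      kbonacci k (n + 1 + i) = (wword k j).getD i 0) :=
  KB.main_aux k hk j hj n h
end

section
/- Let ℓ^j(i) denote the length of θ^{j+1}(i) for the k-bonacci substitution θ. Then for each 1 ≤ h ≤ k−1 and each letter i, ℓ^h(i) = 2·ℓ^{h−1}(i) − [h + i = k−1], where [·] is the indicator (Kronecker delta). -/
/-- ℓ^j(i) is the length of θ^{j+1}(i). -/
def ell (k j i : ℕ) : ℕ := ((subW k)^[j + 1] [i]).length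

/-- Abbreviation: length of θ^m(i). -/
def LL (k m i : ℕ) : ℕ := ((subW k)^[m] [i]).length

lemma iter_append (k m : ℕ) (a b : List ℕ) :
    (subW k)^[m] (a ++ b) = (subW k)^[m] a ++ (subW k)^[m] b := by
  induction m generalizing a b with
  | zero => rfl
  | succ n ih => simp [Function.iterate_succ_apply, subW_append, ih]

lemma subW_single (k i : ℕ) :
    subW k [i] = if i + 1 < k then [0, i + 1] else [0] := by
  simp [subW]

lemma LL_step (k m i : ℕ) :
    LL k (m + 1) i = LL k m 0 + (if i + 1 < k then LL k m (i + 1) else 0) := by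
  unfold LL
  rw [Function.iterate_succ_apply, subW_single]
  split_ifs with h
  · have : ([0, i + 1] : List ℕ) = [0] ++ [i + 1] := rfl
    rw [this, iter_append, List.length_append]
  · simp

lemma key (k : ℕ) (hk : 2 ≤ k) :
    ∀ h, 1 ≤ h → h ≤ k - 1 → ∀ i, i < k →
      LL k (h + 1) i + (if h + i = k - 1 then 1 else 0) = 2 * LL k h i := by
  intro h h1
  induction h, h1 using Nat.le_induction with
  | base =>
    intro _ i hi
    have e1 := LL_step k 1 i
    have e2 := LL_step k 0 i
    have e3 := LL_step k 0 0
    have e4 := LL_step k 0 (i + 1)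
    have z : ∀ j, LL k 0 j = 1 := by intro j; simp [LL]
    rw [z 0] at e3 e4
    rw [z 0] at e2
    rw [z (0 + 1)] at e3
    rw [z (i + 1)] at e2
    rw [z (i + 1 + 1)] at e4
    rw [e3, e4] at e1
    rw [e1, e2]
    split_ifs <;> omega
  | succ n hn ih =>
    intro h2 i hi
    have e1 := LL_step k (n + 1) i
    have e2 := LL_step k n i
    have i0 := ih (by omega) 0 (by omega)
    by_cases hc : i + 1 < k
    · have i1 := ih (by omega) (i + 1) (by omega)
      rw [if_pos hc] at e1 e2
      rw [e1, e2]
      split_ifs at i0 i1 ⊢ <;> omega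
    · rw [if_neg hc] at e1 e2
      rw [e1, e2]
      split_ifs at i0 ⊢ <;> omega

/-- For each 1 ≤ h ≤ k−1 and each letter i,
ℓ^h(i) = 2·ℓ^{h−1}(i) − [h + i = k−1]. -/
theorem ell_recursion (k h i : ℕ) (hk : 2 ≤ k) (h1 : 1 ≤ h) (h2 : h ≤ k - 1)
    (hi : i < k) :
    ell k h i = 2 * ell k (h - 1) i - (if h + i = k - 1 then 1 else 0) := by
  have hkey := key k hk h h1 h2 i hi
  have e : h - 1 + 1 = h := by omega
  show LL k (h + 1) i = 2 * LL k (h - 1 + 1) i - (if h + i = k - 1 then 1 else 0)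
  rw [e]
  omega
end

section
/- With X^j the position sequence of letter j in the k-bonacci word, define the difference sequences Δ^j_n = X^{j+1}_n − X^j_n for 0 ≤ j ≤ k−2. Then the sets {Δ^j_n : n ≥ 1} for 0 ≤ j ≤ k−2 are pairwise disjoint. -/
/-- X^j_n: the 1-based position of the n-th (1-based) occurrence of the
letter j in the k-bonacci word. -/
noncomputable def Xpos (k j n : ℕ) : ℕ :=
  Nat.nth (fun m => kbonacci k m = j) (n - 1) + 1

/-- Δ^j_n = X^{j+1}_n − X^j_n, the difference rows of the positions table. -/
noncomputable def Δrow (k j n : ℕ) : ℕ := Xpos k (j + 1) n - Xpos k j n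

/-!
Since the word `ω` is the fixed point of `σ`, and `σ c = 0 (c+1)` has length two exactly when
`c ≠ k - 1`, the image of `ω t` starts at position `t + A t`, where `A t = nonLastCount k t`
counts the letters `≠ k - 1` among `ω 0, …, ω (t - 1)`. Hence the occurrences of `j + 1` are
the second letters of the images of the occurrences of `j`, in the same order, so
`X^{j+1}_n = X^j_n + A t + 1` with `t = X^j_n - 1`, i.e. `Δ^j_n = A t + 1` where `ω t = j`.
Finally `A` is strictly increasing past every letter `≠ k - 1`, so it is injective on positions
carrying letters `≤ k - 2`, and positions carrying different letters are different.
-/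

theorem List.getElem?_flatMap_length_take_add {α β : Type*} (f : α → List β) {l : List α}
    {t i : ℕ} (ht : t < l.length) (hi : i < (f l[t]).length) :
    (l.flatMap f)[((l.take t).flatMap f).length + i]? = (f l[t])[i]? := by
  have hl : l = l.take t ++ l[t] :: l.drop (t + 1) := by
    rw [← List.drop_eq_getElem_cons ht, List.take_append_drop]
  have hlen : (l.take t).length = t := List.length_take_of_le ht.le
  generalize l.take t = a, l[t] = b, l.drop (t + 1) = c at hl hi hlen
  subst hl
  rw [List.flatMap_append, List.flatMap_cons, ← List.append_assoc,
    List.getElem?_append_left (by simpa using hi), List.getElem?_append_right (by omega)]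
  simp

namespace KBonacci

def letterImage (k j : ℕ) : List ℕ := if j + 1 < k then [0, j + 1] else [0]

theorem subW_eq_flatMap (k : ℕ) (w : List ℕ) : subW k w = w.flatMap (letterImage k) := rfl

def nonLastCount (k t : ℕ) : ℕ := Nat.count (fun m => kbonacci k m + 1 < k) t

theorem iterate_prefix_iterate_succ (k m : ℕ) :
    (subW k)^[m] [0] <+: (subW k)^[m + 1] [0] := by
  induction m with
  | zero =>
    rw [Function.iterate_zero_apply, Function.iterate_one, subW_eq_flatMap, List.flatMap_singleton]
    unfold letterImage
    split_ifs <;> simp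
  | succ m ih =>
    rw [Function.iterate_succ_apply', Function.iterate_succ_apply' (n := m + 1),
      subW_eq_flatMap, subW_eq_flatMap]
    exact ih.flatMap _

theorem iterate_prefix_iterate_of_le (k : ℕ) {m m' : ℕ} (h : m ≤ m') :
    (subW k)^[m] [0] <+: (subW k)^[m'] [0] := by
  induction m', h using Nat.le_induction with
  | base => exact List.prefix_refl _
  | succ m' _ ih => exact ih.trans (iterate_prefix_iterate_succ k m')

theorem length_le_length_flatMap_letterImage (k : ℕ) (w : List ℕ) :
    w.length ≤ (w.flatMap (letterImage k)).length := by
  induction w with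
  | nil => simp
  | cons j w ih =>
    have : 1 ≤ (letterImage k j).length := by unfold letterImage; split <;> simp
    rw [List.flatMap_cons, List.length_append, List.length_cons]
    omega

theorem lt_length_iterate {k : ℕ} (hk : 2 ≤ k) (m : ℕ) : m < ((subW k)^[m] [0]).length := by
  induction m with
  | zero => simp
  | succ m ih =>
    obtain ⟨w, hw⟩ : [0] <+: (subW k)^[m] [0] := iterate_prefix_iterate_of_le k (Nat.zero_le m)
    have h01 : letterImage k 0 = [0, 1] := if_pos (by omega)
    have hlen : ((subW k)^[m] [0]).length = w.length + 1 := by rw [← hw]; simp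
    have := length_le_length_flatMap_letterImage k w
    rw [Function.iterate_succ_apply', subW_eq_flatMap, ← hw, List.singleton_append,
      List.flatMap_cons, h01, List.length_append]
    simp only [List.length_cons, List.length_nil]
    omega

theorem kbonacci_eq_of_getElem?_iterate {k : ℕ} (hk : 2 ≤ k) {m n x : ℕ}
    (h : ((subW k)^[m] [0])[n]? = some x) : kbonacci k n = x := by
  have agree : ∀ {l₁ l₂ : List ℕ}, l₁ <+: l₂ → n < l₁.length → l₂[n]? = l₁[n]? :=
    fun hl hn => by rw [List.getElem?_eq_getElem hn, hl.getElem hn, List.getElem?_eq_getElem]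
  have hn : n < ((subW k)^[n + 1] [0]).length := (lt_length_iterate hk (n + 1)).trans' (by omega)
  rw [kbonacci, List.getD_eq_getElem?_getD]
  rcases le_total m (n + 1) with hm | hm
  · rw [agree (iterate_prefix_iterate_of_le k hm) (List.getElem?_eq_some_iff.1 h).1, h]; rfl
  · rw [← agree (iterate_prefix_iterate_of_le k hm) hn, h]; rfl

theorem take_iterate_eq_map_range {k : ℕ} (hk : 2 ≤ k) {m t : ℕ}
    (ht : t ≤ ((subW k)^[m] [0]).length) :
    ((subW k)^[m] [0]).take t = (List.range t).map (kbonacci k) := by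
  refine List.ext_getElem? fun i => ?_
  rw [List.getElem?_take, List.getElem?_map]
  split_ifs with hi
  · rw [List.getElem?_range hi, List.getElem?_eq_getElem (by omega), Option.map_some,
      kbonacci_eq_of_getElem?_iterate hk (m := m) (List.getElem?_eq_getElem (by omega))]
  · rw [List.getElem?_eq_none (by simpa using hi)]; rfl

theorem length_flatMap_letterImage_map_range (k t : ℕ) :
    (((List.range t).map (kbonacci k)).flatMap (letterImage k)).length = t + nonLastCount k t := by
  induction t with
  | zero => simp [nonLastCount]
  | succ t ih =>
    rw [List.range_succ, List.map_append, List.flatMap_append, List.length_append, ih,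
      nonLastCount, nonLastCount, Nat.count_succ]
    by_cases h : kbonacci k t + 1 < k <;> simp [letterImage, h] <;> omega

theorem kbonacci_add_nonLastCount_add {k : ℕ} (hk : 2 ≤ k) (t : ℕ) {i : ℕ}
    (hi : i < (letterImage k (kbonacci k t)).length) :
    kbonacci k (t + nonLastCount k t + i) = (letterImage k (kbonacci k t))[i] := by
  have ht : t < ((subW k)^[t + 1] [0]).length := lt_length_iterate hk (t + 1) |>.trans' (by omega)
  have hWt : ((subW k)^[t + 1] [0])[t] = kbonacci k t :=
    (kbonacci_eq_of_getElem?_iterate hk (List.getElem?_eq_getElem ht)).symm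
  have hblock := List.getElem?_flatMap_length_take_add (letterImage k) ht (by rwa [hWt])
  simp only [hWt, List.getElem?_eq_getElem hi] at hblock
  rw [take_iterate_eq_map_range hk ht.le, length_flatMap_letterImage_map_range, ← subW_eq_flatMap,
    ← Function.iterate_succ_apply' (subW k)] at hblock
  exact kbonacci_eq_of_getElem?_iterate hk hblock

theorem kbonacci_add_nonLastCount {k : ℕ} (hk : 2 ≤ k) (t : ℕ) :
    kbonacci k (t + nonLastCount k t) = 0 := by
  have h := kbonacci_add_nonLastCount_add hk t (i := 0) (by unfold letterImage; split <;> simp)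
  unfold letterImage at h
  split at h <;> simpa using h

theorem kbonacci_add_nonLastCount_add_one {k : ℕ} (hk : 2 ≤ k) {t : ℕ}
    (ht : kbonacci k t + 1 < k) :
    kbonacci k (t + nonLastCount k t + 1) = kbonacci k t + 1 := by
  have h := kbonacci_add_nonLastCount_add hk t (i := 1) (by simp [letterImage, ht])
  simpa [letterImage, ht] using h

theorem nonLastCount_succ (k t : ℕ) :
    nonLastCount k (t + 1) = nonLastCount k t + if kbonacci k t + 1 < k then 1 else 0 :=
  Nat.count_succ _ _

theorem count_letter_succ_add_nonLastCount {k j : ℕ} (hk : 2 ≤ k) (hj : j + 1 < k) (t : ℕ) :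
    Nat.count (fun m => kbonacci k m = j + 1) (t + nonLastCount k t) =
      Nat.count (fun m => kbonacci k m = j) t := by
  induction t with
  | zero => simp [nonLastCount]
  | succ t ih =>
    have h0 := kbonacci_add_nonLastCount hk t
    by_cases ht : kbonacci k t + 1 < k
    · have h1 := kbonacci_add_nonLastCount_add_one hk ht
      rw [nonLastCount_succ, if_pos ht, show t + 1 + (nonLastCount k t + 1) =
        t + nonLastCount k t + 1 + 1 by omega, Nat.count_succ, Nat.count_succ, ih, h0, h1,
        Nat.count_succ]
      simp
    · rw [nonLastCount_succ, if_neg ht, show t + 1 + (nonLastCount k t + 0) =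
        t + nonLastCount k t + 1 by omega, Nat.count_succ, ih, h0, Nat.count_succ]
      have : kbonacci k t ≠ j := by omega
      simp [this]

theorem infinite_setOf_kbonacci_eq {k : ℕ} (hk : 2 ≤ k) {j : ℕ} (hj : j < k) :
    {m | kbonacci k m = j}.Infinite := by
  induction j with
  | zero =>
    refine Set.infinite_of_forall_exists_gt fun a => ⟨a + 1 + nonLastCount k (a + 1), ?_, by omega⟩
    exact kbonacci_add_nonLastCount hk (a + 1)
  | succ j ih =>
    refine Set.infinite_of_forall_exists_gt fun a => ?_
    obtain ⟨b, hb, hab⟩ := (ih (by omega)).exists_gt a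
    refine ⟨b + nonLastCount k b + 1, ?_, by omega⟩
    rw [Set.mem_ofPred_eq, kbonacci_add_nonLastCount_add_one hk (by rw [hb]; omega), hb]

theorem nth_letter_succ {k j : ℕ} (hk : 2 ≤ k) (hj : j + 1 < k) (n : ℕ) :
    Nat.nth (fun m => kbonacci k m = j + 1) n =
      Nat.nth (fun m => kbonacci k m = j) n +
        nonLastCount k (Nat.nth (fun m => kbonacci k m = j) n) + 1 := by
  have hinf := infinite_setOf_kbonacci_eq hk (j := j) (by omega)
  set t := Nat.nth (fun m => kbonacci k m = j) n
  have ht : kbonacci k t = j := Nat.nth_mem_of_infinite hinf n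
  have hletter : kbonacci k (t + nonLastCount k t + 1) = j + 1 := by
    rw [kbonacci_add_nonLastCount_add_one hk (by omega), ht]
  have hcount : Nat.count (fun m => kbonacci k m = j + 1) (t + nonLastCount k t + 1) = n := by
    rw [Nat.count_succ, count_letter_succ_add_nonLastCount hk hj,
      Nat.count_nth_of_infinite hinf, kbonacci_add_nonLastCount hk]
    simp
  exact hcount ▸ Nat.nth_count hletter

theorem Δrow_eq_nonLastCount_add_one {k j : ℕ} (hk : 2 ≤ k) (hj : j + 1 < k) (n : ℕ) :
    Δrow k j n = nonLastCount k (Nat.nth (fun m => kbonacci k m = j) (n - 1)) + 1 := by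
  rw [Δrow, Xpos, Xpos, nth_letter_succ hk hj]
  omega

theorem nonLastCount_injOn (k : ℕ) : Set.InjOn (nonLastCount k) {t | kbonacci k t + 1 < k} :=
  fun _ hs _ ht => Nat.count_injective hs ht

end KBonacci

open KBonacci in
/-- The value sets {Δ^j_n : n ≥ 1}, 0 ≤ j ≤ k−2, are pairwise disjoint. -/
theorem delta_rows_disjoint (k : ℕ) (hk : 2 ≤ k) (i j : ℕ)
    (hi : i ≤ k - 2) (hj : j ≤ k - 2) (hij : i ≠ j) :
    Disjoint {m | ∃ n, 1 ≤ n ∧ Δrow k i n = m}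
             {m | ∃ n, 1 ≤ n ∧ Δrow k j n = m} := by
  rw [Set.disjoint_left]
  rintro _ ⟨n, -, rfl⟩ ⟨n', -, heq⟩
  rw [Δrow_eq_nonLastCount_add_one hk (by omega), Δrow_eq_nonLastCount_add_one hk (by omega),
    add_left_inj] at heq
  set ti := Nat.nth (fun m => kbonacci k m = i) (n - 1)
  set tj := Nat.nth (fun m => kbonacci k m = j) (n' - 1)
  have hti : kbonacci k ti = i :=
    Nat.nth_mem_of_infinite (infinite_setOf_kbonacci_eq hk (by omega)) _
  have htj : kbonacci k tj = j :=
    Nat.nth_mem_of_infinite (infinite_setOf_kbonacci_eq hk (by omega)) _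
  have hsame : tj = ti :=
    nonLastCount_injOn k (show kbonacci k tj + 1 < k by omega)
      (show kbonacci k ti + 1 < k by omega) heq
  exact hij (by rw [← hti, ← htj, hsame])
end

section
/- For the Tribonacci word (k = 3), let x_i, y_i, z_i be the positions of the i-th occurrence of 0, 1, 2 respectively. Then the sequences a_i = y_i − x_i and b_i = z_i − y_i are complementary: every positive integer occurs exactly once in exactly one of the two sequences. -/
/-!
Let `t = σ(t)` be the Tribonacci word and `L n` (`blockStart n`) the length of `σ(t[0, n))`.
Then `t` is the concatenation of the blocks `σ(t n)`, the block of `t n` starting at `L n`; every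
block starts with `0`, and its second letter, if any, is `t n + 1`. Hence the `k`-th `0`, `1` and
`2` (counting from `0`) sit at `L k`, `L (L k) + 1` and `L (L (L k) + 1) + 1`. Counting the
letters other than `2` in `σ(t[0, n))` gives `L (L n) = L n + w n` with
`w n = n + #{j < n | t j = 0}` (`weight n`), hence `a (k + 1) = w k + 1` and
`b (k + 1) = w (L k) + 2`. Since `w` grows by `2` exactly at the zeros `L j` of `t` and by `1`
elsewhere, the values `w n + 1` and the skipped values `w (L j) + 2` cover every positive integer
exactly once.
-/

/-- The Tribonacci substitution 0 ↦ 01, 1 ↦ 02, 2 ↦ 0, applied letterwise. -/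
def tribSub (w : List ℕ) : List ℕ :=
  w.flatMap (fun j => if j + 1 < 3 then [0, j + 1] else [0])

/-- The Tribonacci word (0-indexed), the fixed point starting with 0. -/
def trib (n : ℕ) : ℕ := (tribSub^[n + 1] [0]).getD n 0

/-- The 1-based position of the i-th (1-based) occurrence of letter j
in the Tribonacci word. -/
noncomputable def tribPos (j i : ℕ) : ℕ :=
  Nat.nth (fun m => trib m = j) (i - 1) + 1

/-- a_i = y_i − x_i and b_i = z_i − y_i, where x, y, z are the position
sequences of 0, 1, 2 in the Tribonacci word. -/
noncomputable def aSeq (i : ℕ) : ℕ := tribPos 1 i - tribPos 0 i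
noncomputable def bSeq (i : ℕ) : ℕ := tribPos 2 i - tribPos 1 i

theorem StrictMono.exists_le_lt_succ {f : ℕ → ℕ} (hf : StrictMono f) (h0 : f 0 = 0) (m : ℕ) :
    ∃ n, f n ≤ m ∧ m < f (n + 1) := by
  have hex : ∃ n, m < f n := ⟨m + 1, Nat.lt_of_lt_of_le m.lt_succ_self (hf.id_le _)⟩
  obtain ⟨n, hn⟩ := Nat.exists_eq_add_one_of_ne_zero (n := Nat.find hex) fun h => by
    simpa [h, h0] using Nat.find_spec hex
  exact ⟨n, not_lt.1 (Nat.find_min hex (by omega)), hn ▸ Nat.find_spec hex⟩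

theorem StrictMono.exists_add_one_eq_xor {w : ℕ → ℕ} (hw : StrictMono w) (h0 : w 0 = 0)
    (hstep : ∀ n, w (n + 1) ≤ w n + 2) {m : ℕ} (hm : 0 < m) :
    Xor (∃ n, w n + 1 = m) (∃ n, w (n + 1) = m ∧ w n + 2 = m) := by
  have hgap : ∀ {n k}, w n < w k → w (n + 1) ≤ w k := fun h => hw.monotone (hw.lt_iff_lt.1 h)
  obtain ⟨n, h₁, h₂⟩ := hw.exists_le_lt_succ h0 (m - 1)
  rcases h₁.eq_or_lt with h | h
  · refine .inl ⟨⟨n, by omega⟩, fun ⟨k, hk₁, hk₂⟩ => ?_⟩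
    have := @hgap k n (by omega)
    omega
  · have := hstep n
    refine .inr ⟨⟨n, by omega, by omega⟩, fun ⟨k, hk⟩ => ?_⟩
    have := @hgap n k (by omega)
    omega

namespace Tribonacci

def letterImage (c : ℕ) : List ℕ := if c + 1 < 3 then [0, c + 1] else [0]

theorem tribSub_eq_flatMap (w : List ℕ) : tribSub w = w.flatMap letterImage := rfl

theorem tribSub_append (u v : List ℕ) : tribSub (u ++ v) = tribSub u ++ tribSub v :=
  List.flatMap_append

theorem tribSub_prefix_tribSub {u v : List ℕ} (h : u <+: v) : tribSub u <+: tribSub v :=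
  h.flatMap _

theorem length_le_length_tribSub (w : List ℕ) : w.length ≤ (tribSub w).length := by
  induction w with
  | nil => rfl
  | cons c w ih =>
    rw [tribSub_eq_flatMap, List.flatMap_cons, List.length_append, ← tribSub_eq_flatMap]
    unfold letterImage
    split <;> simp <;> omega

def approx (k : ℕ) : List ℕ := tribSub^[k] [0]

theorem approx_succ (k : ℕ) : approx (k + 1) = tribSub (approx k) :=
  Function.iterate_succ_apply' _ _ _

theorem approx_prefix_approx_succ (k : ℕ) : approx k <+: approx (k + 1) := by
  induction k with
  | zero => exact ⟨[1], rfl⟩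
  | succ k ih => simpa only [approx_succ] using tribSub_prefix_tribSub ih

theorem approx_prefix_approx {a b : ℕ} (h : a ≤ b) : approx a <+: approx b := by
  induction b, h using Nat.le_induction with
  | base => exact List.prefix_rfl
  | succ b _ ih => exact ih.trans (approx_prefix_approx_succ b)

theorem lt_length_approx (k : ℕ) : k < (approx k).length := by
  induction k with
  | zero => decide
  | succ k ih =>
    obtain ⟨w, hw⟩ := approx_prefix_approx (Nat.zero_le k)
    replace hw : 0 :: w = approx k := hw
    have hlen : (approx (k + 1)).length = (tribSub w).length + 2 := by
      rw [approx_succ, ← hw]; rfl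
    have := length_le_length_tribSub w
    rw [← hw, List.length_cons] at ih
    omega

theorem trib_eq_getElem_approx {k m : ℕ} (h : m < (approx k).length) : trib m = (approx k)[m] := by
  have hm : m < (approx (m + 1)).length := (lt_length_approx (m + 1)).trans' m.lt_succ_self
  show (approx (m + 1)).getD m 0 = _
  rw [List.getD_eq_getElem _ _ hm]
  rcases le_total k (m + 1) with hk | hk
  · exact ((approx_prefix_approx hk).getElem h).symm
  · exact (approx_prefix_approx hk).getElem hm

def prefixWord (n : ℕ) : List ℕ := (List.range n).map trib

theorem prefixWord_succ (n : ℕ) : prefixWord (n + 1) = prefixWord n ++ [trib n] := by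
  simp [prefixWord, List.range_succ]

theorem prefixWord_prefix_approx {n k : ℕ} (h : n ≤ (approx k).length) :
    prefixWord n <+: approx k := by
  refine List.prefix_iff_eq_take.2 (List.ext_getElem (by simp [prefixWord, h]) fun j hj _ => ?_)
  simp only [prefixWord, List.getElem_map, List.getElem_range, List.getElem_take]
  exact trib_eq_getElem_approx _

theorem length_letterImage (c : ℕ) : (letterImage c).length = if c < 2 then 2 else 1 := by
  unfold letterImage; split_ifs <;> first | rfl | omega

theorem getElem_letterImage {c i : ℕ} (hi : i < (letterImage c).length) :
    (letterImage c)[i] = if i = 0 then 0 else c + 1 := by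
  unfold letterImage at hi ⊢
  split_ifs at hi ⊢ <;> obtain _ | _ | i := i <;> simp_all

def blockStart (n : ℕ) : ℕ := (tribSub (prefixWord n)).length

theorem tribSub_prefixWord_succ (n : ℕ) :
    tribSub (prefixWord (n + 1)) = tribSub (prefixWord n) ++ letterImage (trib n) := by
  simp [prefixWord_succ, tribSub_eq_flatMap]

theorem blockStart_zero : blockStart 0 = 0 := rfl

theorem blockStart_succ (n : ℕ) :
    blockStart (n + 1) = blockStart n + (letterImage (trib n)).length := by
  rw [blockStart, tribSub_prefixWord_succ, List.length_append, blockStart]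

theorem blockStart_strictMono : StrictMono blockStart :=
  strictMono_nat_of_lt_succ fun n => by
    rw [blockStart_succ, length_letterImage]; split <;> omega

theorem trib_blockStart_add {n i : ℕ} (hi : i < (letterImage (trib n)).length) :
    trib (blockStart n + i) = if i = 0 then 0 else trib n + 1 := by
  have hpre : tribSub (prefixWord n) ++ letterImage (trib n) <+: approx (n + 2) := by
    rw [← tribSub_prefixWord_succ, approx_succ]
    exact tribSub_prefix_tribSub (prefixWord_prefix_approx (lt_length_approx (n + 1)).le)
  have hlt : blockStart n + i < (tribSub (prefixWord n) ++ letterImage (trib n)).length := by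
    rw [List.length_append]; exact Nat.add_lt_add_left hi _
  rw [trib_eq_getElem_approx (hlt.trans_le hpre.length_le), ← hpre.getElem hlt,
    List.getElem_append_right (by simp [blockStart]), ← getElem_letterImage hi]
  simp [blockStart]

theorem exists_blockStart_add_eq (m : ℕ) :
    ∃ n i, i < (letterImage (trib n)).length ∧ blockStart n + i = m := by
  obtain ⟨n, h₁, h₂⟩ := blockStart_strictMono.exists_le_lt_succ blockStart_zero m
  rw [blockStart_succ] at h₂
  exact ⟨n, m - blockStart n, by omega, by omega⟩

theorem trib_eq_zero_iff {m : ℕ} : trib m = 0 ↔ m ∈ Set.range blockStart := by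
  constructor
  · obtain ⟨n, i, hi, rfl⟩ := exists_blockStart_add_eq m
    intro h
    rw [trib_blockStart_add hi] at h
    have hi0 : i = 0 := by
      by_contra hi0
      rw [if_neg hi0] at h
      omega
    exact ⟨n, by rw [hi0, add_zero]⟩
  · rintro ⟨n, rfl⟩
    simpa using trib_blockStart_add (n := n) (i := 0) (by rw [length_letterImage]; split <;> omega)

theorem trib_eq_succ_iff {m c : ℕ} (hc : c < 2) :
    trib m = c + 1 ↔ ∃ n, trib n = c ∧ blockStart n + 1 = m := by
  constructor
  · obtain ⟨n, i, hi, rfl⟩ := exists_blockStart_add_eq m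
    intro h
    rw [trib_blockStart_add hi] at h
    have hi0 : i ≠ 0 := by
      rintro rfl
      simp at h
    rw [if_neg hi0] at h
    rw [length_letterImage] at hi
    exact ⟨n, by omega, by split at hi <;> omega⟩
  · rintro ⟨n, rfl, rfl⟩
    simpa using trib_blockStart_add (n := n) (i := 1) (by rw [length_letterImage, if_pos hc]; omega)

theorem nth_trib_eq_zero : Nat.nth (fun m => trib m = 0) = blockStart :=
  Nat.nth_eq_of_strictMono blockStart_strictMono fun _ => trib_eq_zero_iff

theorem nth_trib_eq_one :
    Nat.nth (fun m => trib m = 1) = fun k => blockStart (blockStart k) + 1 := by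
  refine Nat.nth_eq_of_strictMono (fun a b h => ?_) fun m => ?_
  · exact Nat.succ_lt_succ (blockStart_strictMono (blockStart_strictMono h))
  · simp [trib_eq_succ_iff (c := 0) two_pos, trib_eq_zero_iff]

theorem nth_trib_eq_two :
    Nat.nth (fun m => trib m = 2) = fun k => blockStart (blockStart (blockStart k) + 1) + 1 := by
  refine Nat.nth_eq_of_strictMono (fun a b h => ?_) fun m => ?_
  · exact Nat.succ_lt_succ (blockStart_strictMono
      (Nat.succ_lt_succ (blockStart_strictMono (blockStart_strictMono h))))
  · simp [trib_eq_succ_iff (c := 1) one_lt_two, trib_eq_succ_iff (c := 0) two_pos,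
      trib_eq_zero_iff]

def weight (n : ℕ) : ℕ := n + Nat.count (fun j => trib j = 0) n

theorem weight_succ (n : ℕ) : weight (n + 1) = weight n + if trib n = 0 then 2 else 1 := by
  rw [weight, weight, Nat.count_succ]
  split <;> omega

theorem weight_strictMono : StrictMono weight :=
  strictMono_nat_of_lt_succ fun n => by rw [weight_succ]; split <;> omega

theorem blockStart_blockStart (n : ℕ) : blockStart (blockStart n) = blockStart n + weight n := by
  induction n with
  | zero => rfl
  | succ n ih =>
    have hzero : blockStart (blockStart n + 1) = blockStart (blockStart n) + 2 := by
      rw [blockStart_succ, trib_eq_zero_iff.2 ⟨n, rfl⟩, length_letterImage, if_pos two_pos]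
    rw [blockStart_succ n, length_letterImage, weight_succ]
    by_cases hc : trib n < 2
    · have hnext : blockStart (blockStart n + 2) = _ := blockStart_succ (blockStart n + 1)
      rw [(trib_eq_succ_iff hc).2 ⟨n, rfl, rfl⟩, length_letterImage] at hnext
      rw [if_pos hc]
      split_ifs at hnext ⊢ <;> omega
    · rw [if_neg hc, if_neg (by omega)]
      omega

theorem aSeq_eq (i : ℕ) : aSeq i = weight (i - 1) + 1 := by
  have := blockStart_blockStart (i - 1)
  simp only [aSeq, tribPos, nth_trib_eq_one, nth_trib_eq_zero]
  omega

theorem bSeq_eq (i : ℕ) : bSeq i = weight (blockStart (i - 1)) + 2 := by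
  have hzero : blockStart (blockStart (blockStart (i - 1)) + 1)
      = blockStart (blockStart (blockStart (i - 1))) + 2 := by
    rw [blockStart_succ, trib_eq_zero_iff.2 ⟨_, rfl⟩, length_letterImage, if_pos two_pos]
  have := blockStart_blockStart (blockStart (i - 1))
  simp only [bSeq, tribPos, nth_trib_eq_two, nth_trib_eq_one]
  omega

theorem weight_succ_eq_add_two_iff {n : ℕ} : weight (n + 1) = weight n + 2 ↔ trib n = 0 := by
  rw [weight_succ]
  split <;> simp_all

theorem exists_aSeq_eq_iff {m : ℕ} : (∃ i, 1 ≤ i ∧ aSeq i = m) ↔ ∃ n, weight n + 1 = m := by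
  simp only [aSeq_eq]
  constructor
  · rintro ⟨i, -, h⟩
    exact ⟨i - 1, h⟩
  · rintro ⟨n, h⟩
    exact ⟨n + 1, by omega, by simpa using h⟩

theorem exists_bSeq_eq_iff {m : ℕ} :
    (∃ i, 1 ≤ i ∧ bSeq i = m) ↔ ∃ n, weight (n + 1) = m ∧ weight n + 2 = m := by
  simp only [bSeq_eq]
  constructor
  · rintro ⟨i, -, h⟩
    exact ⟨_, (weight_succ_eq_add_two_iff.2 (trib_eq_zero_iff.2 ⟨_, rfl⟩)).trans h, h⟩
  · rintro ⟨n, h₁, h₂⟩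
    obtain ⟨j, rfl⟩ := trib_eq_zero_iff.1 (weight_succ_eq_add_two_iff.1 (h₁.trans h₂.symm))
    exact ⟨j + 1, by omega, by simpa using h₂⟩

theorem exists_aSeq_eq_xor_exists_bSeq_eq {m : ℕ} (hm : 0 < m) :
    Xor (∃ i, 1 ≤ i ∧ aSeq i = m) (∃ i, 1 ≤ i ∧ bSeq i = m) := by
  rw [exists_aSeq_eq_iff, exists_bSeq_eq_iff]
  exact weight_strictMono.exists_add_one_eq_xor rfl
    (fun n => by rw [weight_succ]; split <;> omega) hm

theorem aSeq_injOn : Set.InjOn aSeq {i | 1 ≤ i} := fun i (hi : 1 ≤ i) j (hj : 1 ≤ j) h => by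
  rw [aSeq_eq, aSeq_eq] at h
  have := weight_strictMono.injective (Nat.add_right_cancel h)
  omega

theorem bSeq_injOn : Set.InjOn bSeq {i | 1 ≤ i} := fun i (hi : 1 ≤ i) j (hj : 1 ≤ j) h => by
  rw [bSeq_eq, bSeq_eq] at h
  have := blockStart_strictMono.injective (weight_strictMono.injective (Nat.add_right_cancel h))
  omega

end Tribonacci

open Tribonacci

/-- The sequences a and b are complementary: every positive integer occurs
exactly once, in exactly one of the two sequences. -/
theorem trib_differences_complementary :
    ∀ m : ℕ, 0 < m →
      ((∃! i, 1 ≤ i ∧ aSeq i = m) ∧ ¬ (∃ i, 1 ≤ i ∧ bSeq i = m)) ∨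
      ((∃! i, 1 ≤ i ∧ bSeq i = m) ∧ ¬ (∃ i, 1 ≤ i ∧ aSeq i = m)) := by
  intro m hm
  have unique {f : ℕ → ℕ} (hf : Set.InjOn f {i | 1 ≤ i}) :
      (∃ i, 1 ≤ i ∧ f i = m) → ∃! i, 1 ≤ i ∧ f i = m :=
    fun ⟨i, hi, hfi⟩ => ⟨i, ⟨hi, hfi⟩, fun j ⟨hj, hfj⟩ => hf hj hi (hfj.trans hfi.symm)⟩
  rcases exists_aSeq_eq_xor_exists_bSeq_eq hm with ⟨ha, hb⟩ | ⟨hb, ha⟩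
  · exact .inl ⟨unique aSeq_injOn ha, hb⟩
  · exact .inr ⟨unique bSeq_injOn hb, ha⟩
end
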